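/- Let G = (V, E) be a simple graph with Δ(G) ≤ 8, let π be a partial 8-edge-coloring of G, and let e = xy be an uncolored butterfly-like edge such that all edges at distance at most 1 from e are colored. Then there exists a partial 8-edge-coloring σ of G whose set of colored edges is π's colored set together with e. -/

import Mathlib

open SimpleGraph

open scoped Classical in
/-- `π` is a proper partial `D`-edge-coloring of `G`: it assigns `none` outside the edge set,
and distinct incident edges receive different colors. -/
def IsProperPEC {V : Type} (G : SimpleGraph V) (D : ℕ) (π : Sym2 V → Option (Fin D)) : Prop :=
  (∀ e, π e ≠ none → e ∈ G.edgeSet) ∧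
    ∀ e₁ e₂ : Sym2 V, e₁ ≠ e₂ → (∃ v, v ∈ e₁ ∧ v ∈ e₂) → π e₁ ≠ none → π e₁ ≠ π e₂

/-- Number of neighbors of `x` having degree `8`. -/
def deg8Nbrs {V : Type} [Fintype V] [DecidableEq V] (G : SimpleGraph V) [DecidableRel G.Adj]
    (x : V) : ℕ :=
  ((G.neighborFinset x).filter (fun w => G.degree w = 8)).card

/-- The edge `xy` is `x`-weak. -/
def IsXWeak {V : Type} [Fintype V] [DecidableEq V] (G : SimpleGraph V) [DecidableRel G.Adj]
    (x y : V) : Prop :=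
  deg8Nbrs G x ≤ 8 - G.degree y + (if G.degree y = 8 then 1 else 0)

/-- The edge `e` is weak: `e = xy` with `xy` `x`-weak or `y`-weak. -/
def IsWeakEdge {V : Type} [Fintype V] [DecidableEq V] (G : SimpleGraph V) [DecidableRel G.Adj]
    (e : Sym2 V) : Prop :=
  ∃ x y : V, e = s(x, y) ∧ G.Adj x y ∧ (IsXWeak G x y ∨ IsXWeak G y x)

/-- A butterfly of the first kind with the given vertices. -/
def IsButterflyB1 {V : Type} [Fintype V] [DecidableEq V] (G : SimpleGraph V) [DecidableRel G.Adj]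
    (x y z v₁ v₂ v₃ : V) : Prop :=
  List.Pairwise (· ≠ ·) [x, y, z, v₁, v₂, v₃] ∧
  G.Adj x y ∧ G.Adj x z ∧ G.Adj y v₁ ∧ G.Adj y v₃ ∧ G.Adj z v₁ ∧ G.Adj z v₂ ∧
  G.Adj x v₁ ∧ G.Adj x v₂ ∧ G.Adj x v₃ ∧
  G.degree y = 3 ∧ G.degree z = 3 ∧ G.degree x = 8 ∧
  G.degree v₁ = 8 ∧ G.degree v₂ = 8 ∧ G.degree v₃ = 8

/-- A butterfly of the second kind with the given vertices. -/
def IsButterflyB2 {V : Type} [Fintype V] [DecidableEq V] (G : SimpleGraph V) [DecidableRel G.Adj]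
    (x y z v₁ v₂ v₃ v₄ : V) : Prop :=
  List.Pairwise (· ≠ ·) [x, y, z, v₁, v₂, v₃, v₄] ∧
  G.Adj x y ∧ G.Adj x z ∧ G.Adj y v₁ ∧ G.Adj y v₄ ∧ G.Adj z v₂ ∧ G.Adj z v₃ ∧
  G.Adj x v₁ ∧ G.Adj x v₂ ∧ G.Adj x v₃ ∧ G.Adj x v₄ ∧
  G.degree y = 3 ∧ G.degree z = 3 ∧ G.degree x = 8 ∧
  G.degree v₁ = 8 ∧ G.degree v₂ = 8 ∧ G.degree v₃ = 8 ∧ G.degree v₄ = 8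

/-- The pair `(x, y)` is the distinguished edge `xy` of some butterfly of `G`. -/
def IsButterflyLikeAt {V : Type} [Fintype V] [DecidableEq V] (G : SimpleGraph V)
    [DecidableRel G.Adj] (x y : V) : Prop :=
  (∃ z v₁ v₂ v₃, IsButterflyB1 G x y z v₁ v₂ v₃) ∨
  (∃ z v₁ v₂ v₃ v₄, IsButterflyB2 G x y z v₁ v₂ v₃ v₄)

/-- The edge `e` is butterfly-like. -/
def IsButterflyLike {V : Type} [Fintype V] [DecidableEq V] (G : SimpleGraph V)
    [DecidableRel G.Adj] (e : Sym2 V) : Prop :=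
  ∃ x y : V, e = s(x, y) ∧ IsButterflyLikeAt G x y

/-- An edge is reducible when it is weak or butterfly-like. -/
def IsReducible {V : Type} [Fintype V] [DecidableEq V] (G : SimpleGraph V) [DecidableRel G.Adj]
    (e : Sym2 V) : Prop :=
  IsWeakEdge G e ∨ IsButterflyLike G e

/-- Reversal of darts, as a permutation. -/
def dartRev {V : Type} (G : SimpleGraph V) : Equiv.Perm G.Dart :=
  ⟨SimpleGraph.Dart.symm, SimpleGraph.Dart.symm,
    fun d => SimpleGraph.Dart.symm_symm d, fun d => SimpleGraph.Dart.symm_symm d⟩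

/-- `ρ` is a rotation system of `G`: it permutes the darts around each vertex
in a single cycle. -/
def IsRotationSystem {V : Type} (G : SimpleGraph V) (ρ : Equiv.Perm G.Dart) : Prop :=
  (∀ d : G.Dart, (ρ d).fst = d.fst) ∧
    ∀ d d' : G.Dart, d.fst = d'.fst → ρ.SameCycle d d'

/-- The face permutation of a rotation system. -/
def facePerm {V : Type} (G : SimpleGraph V) (ρ : Equiv.Perm G.Dart) : Equiv.Perm G.Dart :=
  (dartRev G).trans ρ

/-- The setoid of darts whose classes are the faces of a combinatorial embedding. -/
def faceSetoid {V : Type} (G : SimpleGraph V) (ρ : Equiv.Perm G.Dart) : Setoid G.Dart :=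
  ⟨(facePerm G ρ).SameCycle, Equiv.Perm.SameCycle.equivalence _⟩

/-- The number of faces of a combinatorial embedding. -/
noncomputable def numFaces {V : Type} (G : SimpleGraph V) (ρ : Equiv.Perm G.Dart) : ℕ :=
  Nat.card (Quotient (faceSetoid G ρ))

/-- The number of isolated vertices of `G`. -/
noncomputable def numIsolated {V : Type} (G : SimpleGraph V) : ℕ :=
  Nat.card {v : V // ∀ w, ¬ G.Adj v w}

/-- The number of connected components of `G`. -/
noncomputable def numComponents {V : Type} (G : SimpleGraph V) : ℕ :=
  Nat.card G.ConnectedComponent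

/-- `G` is embeddable in an orientable surface of genus at most `g`: it has a combinatorial
embedding (rotation system) whose Euler characteristic, summed over components, is at least
`2 * (number of components) - 2 * g`. -/
def GenusLE {V : Type} (G : SimpleGraph V) (g : ℕ) : Prop :=
  ∃ ρ : Equiv.Perm G.Dart, IsRotationSystem G ρ ∧
    2 * (numComponents G : ℤ) - 2 * (g : ℤ) ≤
      (Nat.card V : ℤ) - (Nat.card G.edgeSet : ℤ) + ((numFaces G ρ + numIsolated G : ℕ) : ℤ)

/-- `G` is planar: it is embeddable in an orientable surface of genus `0`, i.e. the sphere. -/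
def IsPlanar {V : Type} (G : SimpleGraph V) : Prop := GenusLE G 0

/-- Color `c` is free at `v` (no colored edge incident to `v` has color `c`). -/
def freeAt {V : Type} {D : ℕ} (π : Sym2 V → Option (Fin D)) (v : V) (c : Fin D) : Prop :=
  ∀ e : Sym2 V, v ∈ e → π e ≠ some c

/-- The graph formed by the edges colored `a` or `b`; its components are the `(a,b)`-chains. -/
def chainGraph {V : Type} {D : ℕ} (π : Sym2 V → Option (Fin D)) (a b : Fin D) : SimpleGraph V :=
  SimpleGraph.fromEdgeSet {e | π e = some a ∨ π e = some b}

/-- `u` and `v` lie on the same `(a,b)`-chain. -/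
def chainReach {V : Type} {D : ℕ} (π : Sym2 V → Option (Fin D)) (a b : Fin D) (u v : V) : Prop :=
  (chainGraph π a b).Reachable u v

/-- `v` is an endpoint of its `(a,b)`-chain (it has at most one neighbor on the chain). -/
def chainEndpoint {V : Type} {D : ℕ} (π : Sym2 V → Option (Fin D)) (a b : Fin D) (v : V) : Prop :=
  ((chainGraph π a b).neighborSet v).Subsingleton

/-- There is an `(a,b)`-chain with endpoints `u` and `v`. -/
def chainPathEndpoints {V : Type} {D : ℕ} (π : Sym2 V → Option (Fin D)) (a b : Fin D)
    (u v : V) : Prop :=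
  u ≠ v ∧ chainReach π a b u v ∧ chainEndpoint π a b u ∧ chainEndpoint π a b v

/-- The `(a,b)`-chain containing `x` is a cycle (no vertex of it is an endpoint). -/
def inChainCycle {V : Type} {D : ℕ} (π : Sym2 V → Option (Fin D)) (a b : Fin D) (x : V) : Prop :=
  ∀ v, chainReach π a b x v → ¬ chainEndpoint π a b v

/-- The vertex `w` is at distance at most `k` from the edge `e`. -/
def vtxEdgeDistLE {V : Type} (G : SimpleGraph V) (k : ℕ) (w : V) (e : Sym2 V) : Prop :=
  ∃ u, u ∈ e ∧ ∃ p : G.Walk w u, p.length ≤ k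

/-- The edges `e₁` and `e₂` are at distance at most `k` from each other. -/
def edgeDistLE {V : Type} (G : SimpleGraph V) (k : ℕ) (e₁ e₂ : Sym2 V) : Prop :=
  ∃ u, u ∈ e₁ ∧ vtxEdgeDistLE G k u e₂

/-- The uncolored edge `xy` has type 0: `π` can be turned into a coloring additionally coloring
`xy` by recoloring only edges at distance at most 1 from `xy`. -/
def HasType0 {V : Type} (G : SimpleGraph V) (π : Sym2 V → Option (Fin 8)) (x y : V) : Prop :=
  ∃ σ : Sym2 V → Option (Fin 8), IsProperPEC G 8 σ ∧
    (∀ e, σ e ≠ none ↔ (π e ≠ none ∨ e = s(x, y))) ∧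
    (∀ e, ¬ edgeDistLE G 1 e s(x, y) → σ e = π e)

/-- The uncolored edge `xy` has type `1_{ab}`. -/
def HasType1 {V : Type} (π : Sym2 V → Option (Fin 8)) (x y : V) (a b : Fin 8) : Prop :=
  freeAt π x a ∧ freeAt π y b ∧ ¬ (chainReach π a b x y ∧ chainEndpoint π a b x)

/-- The uncolored edge `xy` has type `2_{ab}`. -/
def HasType2 {V : Type} (G : SimpleGraph V) (π : Sym2 V → Option (Fin 8)) (x y : V)
    (a b : Fin 8) : Prop :=
  freeAt π y a ∧ freeAt π y b ∧
  ∃ c : Fin 8, c ≠ b ∧ freeAt π x c ∧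
    ∃ z : V, G.Adj x z ∧ G.Adj y z ∧ π s(y, z) = some c ∧ π s(x, z) = some a ∧
      ¬ inChainCycle π a b x

/-- The uncolored edge `xy` has type `3_{ab}`. -/
def HasType3 {V : Type} (G : SimpleGraph V) (π : Sym2 V → Option (Fin 8)) (x y : V)
    (a b : Fin 8) : Prop :=
  freeAt π x a ∧ freeAt π y b ∧ chainPathEndpoints π a b x y ∧
  ∃ c : Fin 8, c ≠ b ∧ freeAt π y c ∧
    ∃ z : V, G.Adj x z ∧ freeAt π z b ∧ π s(x, z) = some c

/-- The uncolored edge `xy` has type `4_{ab}`. -/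
def HasType4 {V : Type} (G : SimpleGraph V) (π : Sym2 V → Option (Fin 8)) (x y : V)
    (a b : Fin 8) : Prop :=
  freeAt π y a ∧ freeAt π y b ∧ inChainCycle π a b x ∧
  ∃ c : Fin 8, freeAt π x c ∧
    ∃ z v : V, z ≠ v ∧ z ≠ x ∧ z ≠ y ∧ v ≠ x ∧ v ≠ y ∧
      G.Adj x v ∧ G.Adj z v ∧ π s(x, v) = some a ∧ π s(z, v) = some c ∧ freeAt π z b

/-- The uncolored edge `xy` has type `5_{ab}`. -/
def HasType5 {V : Type} (G : SimpleGraph V) (π : Sym2 V → Option (Fin 8)) (x y : V)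
    (a b : Fin 8) : Prop :=
  freeAt π y a ∧ freeAt π x b ∧ chainPathEndpoints π a b x y ∧
  ∃ c : Fin 8, c ≠ a ∧ freeAt π y c ∧
    ∃ z v : V, z ≠ v ∧ z ≠ x ∧ z ≠ y ∧ v ≠ x ∧ v ≠ y ∧
      G.Adj x v ∧ G.Adj z v ∧ π s(x, v) = some c ∧ π s(z, v) = some a ∧
      freeAt π z b ∧ freeAt π z c

/-- The uncolored edge `xy` has type `6_{abcd}`. -/
def HasType6 {V : Type} (G : SimpleGraph V) (π : Sym2 V → Option (Fin 8)) (x y : V)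
    (a b c d : Fin 8) : Prop :=
  freeAt π y a ∧ freeAt π y c ∧ freeAt π y d ∧ freeAt π x b ∧
  chainPathEndpoints π a b x y ∧ inChainCycle π c d x ∧
  ∃ z v₁ v₂ : V, z ≠ v₁ ∧ z ≠ v₂ ∧ v₁ ≠ v₂ ∧ z ≠ x ∧ z ≠ y ∧ v₁ ≠ x ∧ v₁ ≠ y ∧ v₂ ≠ x ∧ v₂ ≠ y ∧
    G.Adj x v₁ ∧ G.Adj x v₂ ∧ G.Adj z v₁ ∧ G.Adj z v₂ ∧
    π s(x, v₁) = some c ∧ π s(x, v₂) = some a ∧ π s(z, v₁) = some a ∧ π s(z, v₂) = some c ∧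
    freeAt π z b ∧ freeAt π z d


/-!
Let `a` be a color missing at `x`. An `(m, t)`-chain is a path or a cycle, so of three vertices
each missing `m` or `t`, at most two lie on a common chain. Hence if `m` is missing at `x` and `t`
at `y`, either swapping the chain through `x` frees `t` at both ends of `xy`, or the chain through
a third such vertex `z` avoids `x` and `y` and may be swapped without disturbing them. The
butterfly provides `z`: like `y` it has degree three and is adjacent to `x`. Unless `a` is also
missing at `y`, a case analysis on the colors of `xz` and of the edges at `z` leads, after at most
three Kempe changes, to a chain from `x` to `z` whose colors are missing at `x` and at `y`
respectively; that chain cannot contain `y` as well, so Kempe's argument applies.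
-/

namespace IsProperPEC

variable {V : Type} {D : ℕ} {G : SimpleGraph V} {π : Sym2 V → Option (Fin D)}

lemma adj (hp : IsProperPEC G D π) {u v : V} {c : Fin D} (h : π s(u, v) = some c) :
    G.Adj u v :=
  hp.1 s(u, v) (by simp [h])

lemma eq_of_color_eq (hp : IsProperPEC G D π) {v a b : V} {c : Fin D}
    (ha : π s(v, a) = some c) (hb : π s(v, b) = some c) : a = b := by
  by_contra hab
  exact hp.2 _ _ (fun h => hab (Sym2.congr_right.mp h))
    ⟨v, Sym2.mem_mk_left _ _, Sym2.mem_mk_left _ _⟩ (by simp [ha]) (ha.trans hb.symm)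

lemma color_ne (hp : IsProperPEC G D π) {v a b : V} {c d : Fin D}
    (ha : π s(v, a) = some c) (hb : π s(v, b) = some d) (hab : a ≠ b) : c ≠ d := by
  rintro rfl
  exact hab (hp.eq_of_color_eq ha hb)

lemma freeAt_of_forall_adj (hp : IsProperPEC G D π) {v : V} {c : Fin D}
    (h : ∀ w, G.Adj v w → π s(v, w) ≠ some c) : freeAt π v c := by
  intro e hv he
  obtain ⟨w, rfl⟩ := Sym2.mem_iff_exists.mp hv
  exact h w (hp.adj he) he

lemma exists_freeAt {x y : V} [Fintype (G.neighborSet x)] (hp : IsProperPEC G D π)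
    (hdeg : G.degree x ≤ D) (hxy : G.Adj x y) (hnone : π s(x, y) = none) :
    ∃ a, freeAt π x a := by
  classical
  let used := (G.neighborFinset x).image fun v => π s(x, v)
  have hcard : used.card < (Finset.univ : Finset (Option (Fin D))).card := by
    calc used.card ≤ (G.neighborFinset x).card := Finset.card_image_le
      _ = G.degree x := G.card_neighborFinset_eq_degree x
      _ < D + 1 := Nat.lt_succ_of_le hdeg
      _ = _ := by simp
  obtain ⟨o, -, ho⟩ := Finset.exists_mem_notMem_of_card_lt_card hcard
  have mem_used : ∀ v, G.Adj x v → π s(x, v) ∈ used := fun v hv =>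
    Finset.mem_image_of_mem _ ((G.mem_neighborFinset x v).mpr hv)
  cases o with
  | none => exact absurd (hnone ▸ mem_used y hxy) ho
  | some a => exact ⟨a, hp.freeAt_of_forall_adj fun v hv h => ho (h ▸ mem_used v hv)⟩

end IsProperPEC

lemma freeAt.ne {V : Type} {D : ℕ} {π : Sym2 V → Option (Fin D)} {v u : V} {a c : Fin D}
    (ha : freeAt π v a) (h : π s(v, u) = some c) : c ≠ a := by
  rintro rfl
  exact ha _ (Sym2.mem_mk_left _ _) h

section Extendable

variable {V : Type} {D : ℕ} {G : SimpleGraph V}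

def Extendable (G : SimpleGraph V) (π : Sym2 V → Option (Fin D)) (e : Sym2 V) : Prop :=
  ∃ σ : Sym2 V → Option (Fin D), IsProperPEC G D σ ∧ ∀ e', σ e' ≠ none ↔ π e' ≠ none ∨ e' = e

lemma Extendable.of_ne_none_iff {π π' : Sym2 V → Option (Fin D)} {e : Sym2 V}
    (h : Extendable G π' e) (hsupp : ∀ e', π' e' ≠ none ↔ π e' ≠ none) : Extendable G π e := by
  obtain ⟨σ, hσ, hσsupp⟩ := h
  exact ⟨σ, hσ, fun e' => (hσsupp e').trans (or_congr_left (hsupp e'))⟩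

lemma extendable_of_freeAt {π : Sym2 V → Option (Fin D)} (hp : IsProperPEC G D π) {x y : V}
    (hxy : G.Adj x y) (hnone : π s(x, y) = none) {c : Fin D} (hx : freeAt π x c)
    (hy : freeAt π y c) : Extendable G π s(x, y) := by
  classical
  have hfree : ∀ v ∈ s(x, y), freeAt π v c := by
    intro v hv
    rcases Sym2.mem_iff.mp hv with rfl | rfl
    exacts [hx, hy]
  refine ⟨Function.update π s(x, y) (some c), ⟨fun e he => ?_, fun e₁ e₂ hne hv he₁ => ?_⟩,
    fun e => ?_⟩
  · by_cases h : e = s(x, y)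
    · exact h ▸ hxy
    · exact hp.1 e (by rwa [Function.update_of_ne h] at he)
  · obtain ⟨v, hv₁, hv₂⟩ := hv
    by_cases h₁ : e₁ = s(x, y)
    · subst h₁
      rw [Function.update_self, Function.update_of_ne (Ne.symm hne)]
      exact fun h => hfree v hv₁ e₂ hv₂ h.symm
    by_cases h₂ : e₂ = s(x, y)
    · subst h₂
      rw [Function.update_self, Function.update_of_ne hne]
      exact hfree v hv₂ e₁ hv₁
    rw [Function.update_of_ne h₁] at he₁ ⊢
    rw [Function.update_of_ne h₂]
    exact hp.2 e₁ e₂ hne ⟨v, hv₁, hv₂⟩ he₁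
  · by_cases h : e = s(x, y) <;> simp [h]

end Extendable

section MaxDegreeTwo

variable {V : Type} {H : SimpleGraph V}

lemma SimpleGraph.Walk.exists_adj_mem_support {u w v : V} (p : H.Walk u w) (huw : u ≠ w)
    (hv : v ∈ p.support) : ∃ a ∈ p.support, H.Adj v a := by
  obtain ⟨i, rfl, hi⟩ := Walk.mem_support_iff_exists_getVert.mp hv
  rcases hi.lt_or_eq with hi | rfl
  · exact ⟨_, p.getVert_mem_support (i + 1), p.adj_getVert_succ hi⟩
  · have hpos : 0 < p.length := Nat.pos_of_ne_zero fun h => huw (p.eq_of_length_eq_zero h)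
    refine ⟨_, p.getVert_mem_support (p.length - 1), ?_⟩
    have := p.adj_getVert_succ (i := p.length - 1) (by omega)
    rw [Nat.sub_add_cancel hpos] at this
    exact this.symm

lemma SimpleGraph.Walk.IsPath.exists_two_adj {u w v : V} {p : H.Walk u w} (hp : p.IsPath)
    (hv : v ∈ p.support) (hvu : v ≠ u) (hvw : v ≠ w) :
    ∃ a ∈ p.support, ∃ b ∈ p.support, a ≠ b ∧ H.Adj v a ∧ H.Adj v b := by
  obtain ⟨i, rfl, hi⟩ := Walk.mem_support_iff_exists_getVert.mp hv
  obtain ⟨j, rfl⟩ : ∃ j, i = j + 1 :=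
    Nat.exists_eq_succ_of_ne_zero (by rintro rfl; exact hvu p.getVert_zero)
  have hlt : j + 1 < p.length := hi.lt_of_ne fun h => hvw (h ▸ p.getVert_length)
  refine ⟨_, p.getVert_mem_support j, _, p.getVert_mem_support (j + 2), fun h => ?_,
    (p.adj_getVert_succ (by omega)).symm, p.adj_getVert_succ hlt⟩
  have := hp.getVert_injOn (show j ≤ p.length by omega) (show j + 2 ≤ p.length by omega) h
  omega

lemma not_reachable_of_subsingleton_neighborSet
    (hdeg : ∀ v a b c, H.Adj v a → H.Adj v b → H.Adj v c → a = b ∨ a = c ∨ b = c)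
    {x y z : V} (hx : (H.neighborSet x).Subsingleton) (hy : (H.neighborSet y).Subsingleton)
    (hz : (H.neighborSet z).Subsingleton) (hxy : x ≠ y) (hxz : x ≠ z) (hyz : y ≠ z)
    (hr : H.Reachable x y) : ¬ H.Reachable x z := by
  classical
  rintro ⟨q⟩
  obtain ⟨p, hp⟩ := hr.some.toPath
  have hzp : z ∉ p.support := fun hzp => by
    obtain ⟨a, -, b, -, hab, ha, hb⟩ := hp.exists_two_adj hzp (Ne.symm hxz) (Ne.symm hyz)
    exact hab (hz ha hb)
  obtain ⟨d, -, hd, hd'⟩ := q.exists_boundary_dart {v | v ∈ p.support} p.start_mem_support hzp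
  by_cases hend : d.fst = x ∨ d.fst = y
  · obtain ⟨a, ha, hadj⟩ := p.exists_adj_mem_support hxy hd
    have hsub : (H.neighborSet d.fst).Subsingleton := by rcases hend with h | h <;> rwa [h]
    exact hd' (hsub hadj d.adj ▸ ha)
  · rw [not_or] at hend
    obtain ⟨a, ha, b, hb, hab, hva, hvb⟩ := hp.exists_two_adj hd hend.1 hend.2
    rcases hdeg _ _ _ _ hva hvb d.adj with h | h | h
    exacts [hab h, hd' (h ▸ ha), hd' (h ▸ hb)]

end MaxDegreeTwo

section Chains

variable {V : Type} {D : ℕ} {G : SimpleGraph V} {π : Sym2 V → Option (Fin D)} {m t : Fin D}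

lemma chainGraph_adj_iff {u v : V} :
    (chainGraph π m t).Adj u v ↔ (π s(u, v) = some m ∨ π s(u, v) = some t) ∧ u ≠ v :=
  fromEdgeSet_adj _

lemma IsProperPEC.chainGraph_adj (hp : IsProperPEC G D π) {u v : V}
    (h : π s(u, v) = some m ∨ π s(u, v) = some t) : (chainGraph π m t).Adj u v :=
  chainGraph_adj_iff.mpr ⟨h, by rcases h with h | h <;> exact (hp.adj h).ne⟩

lemma IsProperPEC.chainReach_of_eq (hp : IsProperPEC G D π) {u v : V} {c : Fin D}
    (h : π s(u, v) = some c) (hc : c = m ∨ c = t) : chainReach π m t u v :=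
  (hp.chainGraph_adj (by rcases hc with rfl | rfl <;> simp [h])).reachable

lemma IsProperPEC.chainGraph_adj_three (hp : IsProperPEC G D π) {v a b c : V}
    (ha : (chainGraph π m t).Adj v a) (hb : (chainGraph π m t).Adj v b)
    (hc : (chainGraph π m t).Adj v c) : a = b ∨ a = c ∨ b = c := by
  rcases (chainGraph_adj_iff.mp ha).1 with ha | ha <;>
    rcases (chainGraph_adj_iff.mp hb).1 with hb | hb <;>
    rcases (chainGraph_adj_iff.mp hc).1 with hc | hc <;>
    first
    | exact Or.inl (hp.eq_of_color_eq ha hb)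
    | exact Or.inr (Or.inl (hp.eq_of_color_eq ha hc))
    | exact Or.inr (Or.inr (hp.eq_of_color_eq hb hc))

lemma IsProperPEC.chainEndpoint_of_freeAt (hp : IsProperPEC G D π) {v : V}
    (h : freeAt π v m ∨ freeAt π v t) : chainEndpoint π m t v := by
  intro a ha b hb
  rcases h with hf | hf
  · have color_t : ∀ {p}, (chainGraph π m t).Adj v p → π s(v, p) = some t := fun hvp =>
      (chainGraph_adj_iff.mp hvp).1.resolve_left (hf _ (Sym2.mem_mk_left _ _))
    exact hp.eq_of_color_eq (color_t ha) (color_t hb)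
  · have color_m : ∀ {p}, (chainGraph π m t).Adj v p → π s(v, p) = some m := fun hvp =>
      (chainGraph_adj_iff.mp hvp).1.resolve_right (hf _ (Sym2.mem_mk_left _ _))
    exact hp.eq_of_color_eq (color_m ha) (color_m hb)

lemma IsProperPEC.not_chainReach_of_freeAt (hp : IsProperPEC G D π) {x y z : V}
    (hx : freeAt π x m ∨ freeAt π x t) (hy : freeAt π y m ∨ freeAt π y t)
    (hz : freeAt π z m ∨ freeAt π z t) (hxy : x ≠ y) (hxz : x ≠ z) (hyz : y ≠ z)
    (hr : chainReach π m t x y) : ¬ chainReach π m t x z :=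
  not_reachable_of_subsingleton_neighborSet (fun _ _ _ _ => hp.chainGraph_adj_three)
    (hp.chainEndpoint_of_freeAt hx) (hp.chainEndpoint_of_freeAt hy)
    (hp.chainEndpoint_of_freeAt hz) hxy hxz hyz hr

end Chains

section KempeSwap

variable {V : Type} {D : ℕ} {G : SimpleGraph V} {π : Sym2 V → Option (Fin D)} {m t : Fin D}
  {v₀ : V}

open Classical in
/-- Edges that meet the chain but carry a third color are fixed by `Equiv.swap m t`. -/
noncomputable def kempeSwap (π : Sym2 V → Option (Fin D)) (m t : Fin D) (v₀ : V) :
    Sym2 V → Option (Fin D) :=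
  fun e => if ∃ v ∈ e, chainReach π m t v₀ v then (π e).map (Equiv.swap m t) else π e

lemma kempeSwap_of_chainReach {e : Sym2 V} {v : V} (hv : v ∈ e) (h : chainReach π m t v₀ v) :
    kempeSwap π m t v₀ e = (π e).map (Equiv.swap m t) :=
  if_pos ⟨v, hv, h⟩

lemma kempeSwap_of_ne {e : Sym2 V} (hm : π e ≠ some m) (ht : π e ≠ some t) :
    kempeSwap π m t v₀ e = π e := by
  unfold kempeSwap
  split_ifs
  · cases hc : π e with
    | none => rfl
    | some c =>
      rw [hc] at hm ht
      simp [Equiv.swap_apply_of_ne_of_ne (fun h => hm (congrArg some h))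
        (fun h => ht (congrArg some h))]
  · rfl

lemma kempeSwap_of_eq_some {e : Sym2 V} {c : Fin D} (h : π e = some c) (hm : c ≠ m)
    (ht : c ≠ t) : kempeSwap π m t v₀ e = some c :=
  (kempeSwap_of_ne (by simpa [h] using hm) (by simpa [h] using ht)).trans h

lemma kempeSwap_of_eq_none {e : Sym2 V} (h : π e = none) : kempeSwap π m t v₀ e = none :=
  (kempeSwap_of_ne (by simp [h]) (by simp [h])).trans h

lemma kempeSwap_ne_none_iff {e : Sym2 V} : kempeSwap π m t v₀ e ≠ none ↔ π e ≠ none := by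
  unfold kempeSwap
  split_ifs <;> simp

lemma IsProperPEC.kempeSwap_of_not_chainReach (hp : IsProperPEC G D π) {e : Sym2 V} {v : V}
    (hv : v ∈ e) (h : ¬ chainReach π m t v₀ v) : kempeSwap π m t v₀ e = π e := by
  by_cases hc : π e = some m ∨ π e = some t
  · refine if_neg fun ⟨u, hu, hr⟩ => h ?_
    by_cases huv : u = v
    · exact huv ▸ hr
    · rw [(Sym2.mem_and_mem_iff huv).mp ⟨hu, hv⟩] at hc
      exact hr.trans (hp.chainGraph_adj hc).reachable
  · rw [not_or] at hc
    exact kempeSwap_of_ne hc.1 hc.2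

lemma IsProperPEC.kempeSwap_mk_of_not_chainReach (hp : IsProperPEC G D π) {v : V}
    (h : ¬ chainReach π m t v₀ v) (u : V) : kempeSwap π m t v₀ s(v, u) = π s(v, u) :=
  hp.kempeSwap_of_not_chainReach (Sym2.mem_mk_left _ _) h

lemma isProperPEC_kempeSwap (hp : IsProperPEC G D π) :
    IsProperPEC G D (kempeSwap π m t v₀) := by
  refine ⟨fun e he => hp.1 e (kempeSwap_ne_none_iff.mp he), fun e₁ e₂ hne ⟨v, hv₁, hv₂⟩ he₁ => ?_⟩
  have hne' := hp.2 e₁ e₂ hne ⟨v, hv₁, hv₂⟩ (kempeSwap_ne_none_iff.mp he₁)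
  by_cases hr : chainReach π m t v₀ v
  · rw [kempeSwap_of_chainReach hv₁ hr, kempeSwap_of_chainReach hv₂ hr]
    exact fun h => hne' (Option.map_injective (Equiv.injective _) h)
  · rwa [hp.kempeSwap_of_not_chainReach hv₁ hr, hp.kempeSwap_of_not_chainReach hv₂ hr]

lemma freeAt_kempeSwap_of_chainReach {v : V} {c : Fin D} (h : chainReach π m t v₀ v)
    (hf : freeAt π v c) : freeAt (kempeSwap π m t v₀) v (Equiv.swap m t c) := by
  intro e hv he
  rw [kempeSwap_of_chainReach hv h] at he
  obtain ⟨c', hc', hswap⟩ := Option.map_eq_some_iff.mp he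
  exact hf e hv (by rw [hc', Equiv.injective _ hswap])

lemma IsProperPEC.freeAt_kempeSwap_of_not_chainReach (hp : IsProperPEC G D π) {v : V}
    {c : Fin D} (h : ¬ chainReach π m t v₀ v) (hf : freeAt π v c) :
    freeAt (kempeSwap π m t v₀) v c := fun e hv => by
  rw [hp.kempeSwap_of_not_chainReach hv h]
  exact hf e hv

lemma Extendable.of_kempeSwap {e : Sym2 V} (h : Extendable G (kempeSwap π m t v₀) e) :
    Extendable G π e :=
  h.of_ne_none_iff fun _ => kempeSwap_ne_none_iff

/-- After swapping the chain at `x`, the color `t` is missing at both ends of `xy`. -/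
lemma IsProperPEC.extendable_of_not_chainReach (hp : IsProperPEC G D π) {x y : V}
    (hxy : G.Adj x y) (hnone : π s(x, y) = none) (hx : freeAt π x m) (hy : freeAt π y t)
    (h : ¬ chainReach π m t x y) : Extendable G π s(x, y) := by
  have hx' : freeAt (kempeSwap π m t x) x t := by
    simpa using freeAt_kempeSwap_of_chainReach (m := m) (t := t) (Reachable.refl x) hx
  exact Extendable.of_kempeSwap (extendable_of_freeAt (isProperPEC_kempeSwap hp) hxy
    (kempeSwap_of_eq_none hnone) hx' (hp.freeAt_kempeSwap_of_not_chainReach h hy))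

lemma IsProperPEC.extendable_or_not_chainReach (hp : IsProperPEC G D π) {x y z : V}
    (hxy : G.Adj x y) (hnone : π s(x, y) = none) (hx : freeAt π x m) (hy : freeAt π y t)
    (hz : freeAt π z m ∨ freeAt π z t) (hxz : x ≠ z) (hyz : y ≠ z) :
    Extendable G π s(x, y) ∨ (¬ chainReach π m t z x ∧ ¬ chainReach π m t z y) := by
  by_cases hr : chainReach π m t x y
  · have hxz' := hp.not_chainReach_of_freeAt (Or.inl hx) (Or.inr hy) hz hxy.ne hxz hyz hr
    exact Or.inr ⟨fun h => hxz' h.symm, fun h => hxz' (hr.trans h.symm)⟩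
  · exact Or.inl (hp.extendable_of_not_chainReach hxy hnone hx hy hr)

lemma IsProperPEC.extendable_of_chainReach (hp : IsProperPEC G D π) {x y z : V}
    (hxy : G.Adj x y) (hnone : π s(x, y) = none) (hx : freeAt π x m) (hy : freeAt π y t)
    (hz : freeAt π z m ∨ freeAt π z t) (hxz : x ≠ z) (hyz : y ≠ z)
    (hr : chainReach π m t x z) : Extendable G π s(x, y) :=
  (hp.extendable_or_not_chainReach hxy hnone hx hy hz hxz hyz).resolve_right
    fun h => h.1 hr.symm

end KempeSwap

lemma Fin.exists_ne_of_four_lt {D : ℕ} (hD : 4 < D) (a b c d : Fin D) :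
    ∃ t, t ≠ a ∧ t ≠ b ∧ t ≠ c ∧ t ≠ d := by
  obtain ⟨t, -, ht⟩ := Finset.exists_mem_notMem_of_card_lt_card (s := {a, b, c, d})
    (t := Finset.univ) (by simpa using Finset.card_le_four.trans_lt hD)
  exact ⟨t, by simpa only [Finset.mem_insert, Finset.mem_singleton, not_or] using ht⟩

/-- Both kinds of butterfly are instances; in one of the first kind `w = u`. -/
structure ButterflyConfig {V : Type} (G : SimpleGraph V) (x y z w w' u u' : V) : Prop where
  adj_xy : G.Adj x y
  adj_xz : G.Adj x z
  adj_xw : G.Adj x w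
  adj_xw' : G.Adj x w'
  adj_xu : G.Adj x u
  adj_xu' : G.Adj x u'
  adj_yw : G.Adj y w
  adj_yw' : G.Adj y w'
  adj_zu : G.Adj z u
  adj_zu' : G.Adj z u'
  y_ne_z : y ≠ z
  z_ne_w : z ≠ w
  z_ne_w' : z ≠ w'
  y_ne_u : y ≠ u
  y_ne_u' : y ≠ u'
  u_ne_u' : u ≠ u'
  nbrs_y : ∀ v, G.Adj y v → v = x ∨ v = w ∨ v = w'
  nbrs_z : ∀ v, G.Adj z v → v = x ∨ v = u ∨ v = u'

namespace ButterflyConfig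

variable {V : Type} {D : ℕ} {G : SimpleGraph V} {x y z w w' u u' : V}
  {π : Sym2 V → Option (Fin D)} {a b c : Fin D}

lemma swap_w (hB : ButterflyConfig G x y z w w' u u') : ButterflyConfig G x y z w' w u u' where
  __ := hB
  adj_xw := hB.adj_xw'
  adj_xw' := hB.adj_xw
  adj_yw := hB.adj_yw'
  adj_yw' := hB.adj_yw
  z_ne_w := hB.z_ne_w'
  z_ne_w' := hB.z_ne_w
  nbrs_y v hv := by rcases hB.nbrs_y v hv with h | h | h <;> simp [h]

lemma swap_u (hB : ButterflyConfig G x y z w w' u u') : ButterflyConfig G x y z w w' u' u where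
  __ := hB
  adj_xu := hB.adj_xu'
  adj_xu' := hB.adj_xu
  adj_zu := hB.adj_zu'
  adj_zu' := hB.adj_zu
  y_ne_u := hB.y_ne_u'
  y_ne_u' := hB.y_ne_u
  u_ne_u' := hB.u_ne_u'.symm
  nbrs_z v hv := by rcases hB.nbrs_z v hv with h | h | h <;> simp [h]

lemma freeAt_y (hB : ButterflyConfig G x y z w w' u u') (hp : IsProperPEC G D π)
    (hnone : π s(x, y) = none) (hw : π s(y, w) = some a) (hw' : π s(y, w') = some b)
    {t : Fin D} (ha : t ≠ a) (hb : t ≠ b) : freeAt π y t :=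
  hp.freeAt_of_forall_adj fun v hv => by
    rcases hB.nbrs_y v hv with rfl | rfl | rfl
    · rw [Sym2.eq_swap, hnone]
      simp
    · simp [hw, ha.symm]
    · simp [hw', hb.symm]

lemma freeAt_z (hB : ButterflyConfig G x y z w w' u u') (hp : IsProperPEC G D π)
    {c₀ c₁ c₂ : Fin D} (hxz : π s(x, z) = some c₀) (hu : π s(z, u) = some c₁)
    (hu' : π s(z, u') = some c₂) {t : Fin D} (h₀ : t ≠ c₀) (h₁ : t ≠ c₁) (h₂ : t ≠ c₂) :
    freeAt π z t :=
  hp.freeAt_of_forall_adj fun v hv => by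
    rcases hB.nbrs_z v hv with rfl | rfl | rfl
    · rw [Sym2.eq_swap, hxz]
      simp [h₀.symm]
    · simp [hu, h₁.symm]
    · simp [hu', h₂.symm]

lemma extendable_of_freeAt_z (hB : ButterflyConfig G x y z w w' u u') (hp : IsProperPEC G D π)
    (hnone : π s(x, y) = none) (ha : freeAt π x a) (hw : π s(y, w) = some a)
    (hw' : π s(y, w') = some b) (hza : freeAt π z a) (hxz : π s(x, z) = some c) (hcb : c ≠ b) :
    Extendable G π s(x, y) :=
  hp.extendable_of_chainReach hB.adj_xy hnone ha (hB.freeAt_y hp hnone hw hw' (ha.ne hxz) hcb)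
    (Or.inl hza) hB.adj_xz.ne hB.y_ne_z (hp.chainReach_of_eq hxz (Or.inr rfl))

lemma extendable_of_xz_ne_of_zu_eq (hB : ButterflyConfig G x y z w w' u u')
    (hp : IsProperPEC G D π) (hD : 4 < D) (hnone : π s(x, y) = none) (ha : freeAt π x a)
    (hw : π s(y, w) = some a) (hw' : π s(y, w') = some b) (hxz : π s(x, z) = some c)
    (hcb : c ≠ b) {c' : Fin D} (hu : π s(z, u) = some a) (hu' : π s(z, u') = some c') :
    Extendable G π s(x, y) := by
  obtain ⟨t, hta, htb, htc, htc'⟩ := Fin.exists_ne_of_four_lt hD a b c c'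
  have hc'a : c' ≠ a := hp.color_ne hu' hu hB.u_ne_u'.symm
  rcases hp.extendable_or_not_chainReach hB.adj_xy hnone ha (hB.freeAt_y hp hnone hw hw' hta htb)
    (Or.inr (hB.freeAt_z hp hxz hu hu' htc hta htc')) hB.adj_xz.ne hB.y_ne_z with h | ⟨hzx, hzy⟩
  · exact h
  have hu_new : kempeSwap π a t z s(z, u) = some t := by
    rw [kempeSwap_of_chainReach (Sym2.mem_mk_left _ _) (Reachable.refl z), hu]
    simp
  have hu'_new : kempeSwap π a t z s(z, u') = some c' := kempeSwap_of_eq_some hu' hc'a htc'.symm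
  have hx_same := hp.kempeSwap_mk_of_not_chainReach hzx
  have hy_same := hp.kempeSwap_mk_of_not_chainReach hzy
  have hxz_new : kempeSwap π a t z s(x, z) = some c := (hx_same z).trans hxz
  exact Extendable.of_kempeSwap <| hB.extendable_of_freeAt_z (isProperPEC_kempeSwap hp)
    ((hx_same y).trans hnone) (hp.freeAt_kempeSwap_of_not_chainReach hzx ha)
    ((hy_same w).trans hw) ((hy_same w').trans hw')
    (hB.freeAt_z (isProperPEC_kempeSwap hp) hxz_new hu_new hu'_new (ha.ne hxz).symm hta.symm
      hc'a.symm) hxz_new hcb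

lemma extendable_of_xz_ne (hB : ButterflyConfig G x y z w w' u u') (hp : IsProperPEC G D π)
    (hD : 4 < D) (hnone : π s(x, y) = none) (ha : freeAt π x a) (hw : π s(y, w) = some a)
    (hw' : π s(y, w') = some b) (hxz : π s(x, z) = some c) (hcb : c ≠ b) {c₁ c₂ : Fin D}
    (hu : π s(z, u) = some c₁) (hu' : π s(z, u') = some c₂) : Extendable G π s(x, y) := by
  by_cases h₁ : c₁ = a
  · exact hB.extendable_of_xz_ne_of_zu_eq hp hD hnone ha hw hw' hxz hcb (h₁ ▸ hu) hu'
  by_cases h₂ : c₂ = a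
  · exact hB.swap_u.extendable_of_xz_ne_of_zu_eq hp hD hnone ha hw hw' hxz hcb (h₂ ▸ hu') hu
  exact hB.extendable_of_freeAt_z hp hnone ha hw hw'
    (hB.freeAt_z hp hxz hu hu' (ha.ne hxz).symm (Ne.symm h₁) (Ne.symm h₂)) hxz hcb

lemma extendable_of_xz_eq_of_xu_ne (hB : ButterflyConfig G x y z w w' u u')
    (hp : IsProperPEC G D π) (hnone : π s(x, y) = none) (ha : freeAt π x a)
    (hw : π s(y, w) = some a) (hw' : π s(y, w') = some b) (hxz : π s(x, z) = some b)
    (hu : π s(z, u) = some a) (hu' : π s(z, u') = some c) {d : Fin D}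
    (hxu : π s(x, u) = some d) (hdc : d ≠ c) : Extendable G π s(x, y) := by
  have hda : d ≠ a := ha.ne hxu
  have hdb : d ≠ b := hp.color_ne hxu hxz hB.adj_zu.ne.symm
  exact hp.extendable_of_chainReach hB.adj_xy hnone ha (hB.freeAt_y hp hnone hw hw' hda hdb)
    (Or.inr (hB.freeAt_z hp hxz hu hu' hdb hda hdc)) hB.adj_xz.ne hB.y_ne_z
    ((hp.chainReach_of_eq hxu (Or.inr rfl)).trans
      (hp.chainReach_of_eq (Sym2.eq_swap ▸ hu) (Or.inl rfl)))

lemma extendable_of_xz_eq_of_xw_eq_zu (hB : ButterflyConfig G x y z w w' u u')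
    (hp : IsProperPEC G D π) (hnone : π s(x, y) = none) (ha : freeAt π x a)
    (hw : π s(y, w) = some a) (hw' : π s(y, w') = some b) (hxz : π s(x, z) = some b)
    {c₀ : Fin D} (hxw : π s(x, w) = some c₀) (hu : π s(z, u) = some c₀)
    (hxu : π s(x, u) = some c) (hu' : π s(z, u') = some c) (hxu' : π s(x, u') ≠ none) :
    Extendable G π s(x, y) := by
  have hc₀c : c₀ ≠ c := hp.color_ne hu hu' hB.u_ne_u'
  rcases hp.extendable_or_not_chainReach hB.adj_xy hnone ha
    (hB.freeAt_y hp hnone hw hw' (ha.ne hxu) (hp.color_ne hxu hxz hB.adj_zu.ne.symm))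
    (Or.inl (hB.freeAt_z hp hxz hu hu' (ha.ne hxz).symm (ha.ne hxw).symm (ha.ne hxu).symm))
    hB.adj_xz.ne hB.y_ne_z with h | ⟨hzx, hzy⟩
  · exact h
  have hu'w : u' ≠ w := by
    rintro rfl
    exact hzy ((hp.chainReach_of_eq hu' (Or.inr rfl)).trans
      (hp.chainReach_of_eq (Sym2.eq_swap ▸ hw) (Or.inl rfl)))
  obtain ⟨d, hxu'⟩ := Option.ne_none_iff_exists'.mp hxu'
  have hu'_new : kempeSwap π a c z s(z, u') = some a := by
    rw [kempeSwap_of_chainReach (Sym2.mem_mk_left _ _) (Reachable.refl z), hu']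
    simp
  have hx_same := hp.kempeSwap_mk_of_not_chainReach hzx
  have hy_same := hp.kempeSwap_mk_of_not_chainReach hzy
  exact Extendable.of_kempeSwap <| hB.swap_u.extendable_of_xz_eq_of_xu_ne
    (isProperPEC_kempeSwap hp) ((hx_same y).trans hnone)
    (hp.freeAt_kempeSwap_of_not_chainReach hzx ha) ((hy_same w).trans hw)
    ((hy_same w').trans hw') ((hx_same z).trans hxz) hu'_new
    (kempeSwap_of_eq_some hu (ha.ne hxw) hc₀c) ((hx_same u').trans hxu')
    (hp.color_ne hxu' hxw hu'w)

lemma extendable_of_xz_eq_of_zu_eq (hB : ButterflyConfig G x y z w w' u u')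
    (hp : IsProperPEC G D π) (hnone : π s(x, y) = none) (ha : freeAt π x a)
    (hw : π s(y, w) = some a) (hw' : π s(y, w') = some b) (hxz : π s(x, z) = some b)
    (hu : π s(z, u) = some a) (hu' : π s(z, u') = some c) (hxu : π s(x, u) ≠ none)
    (hxw : π s(x, w) ≠ none) (hxu' : π s(x, u') ≠ none) : Extendable G π s(x, y) := by
  obtain ⟨d, hxu⟩ := Option.ne_none_iff_exists'.mp hxu
  by_cases hdc : d ≠ c
  · exact hB.extendable_of_xz_eq_of_xu_ne hp hnone ha hw hw' hxz hu hu' hxu hdc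
  rw [not_not.mp hdc] at hxu
  obtain ⟨g, hxw⟩ := Option.ne_none_iff_exists'.mp hxw
  have hwu : w ≠ u := fun h => hB.y_ne_z
    (hp.eq_of_color_eq (Sym2.eq_swap ▸ hw) (h ▸ Sym2.eq_swap ▸ hu))
  have hga : g ≠ a := ha.ne hxw
  have hgb : g ≠ b := hp.color_ne hxw hxz hB.z_ne_w.symm
  have hgc : g ≠ c := hp.color_ne hxw hxu hwu
  have hba : b ≠ a := ha.ne hxz
  have hxy_r : chainReach π a g x y := (hp.chainReach_of_eq hxw (Or.inr rfl)).trans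
    (hp.chainReach_of_eq (Sym2.eq_swap ▸ hw) (Or.inl rfl))
  have hxz_nr : ¬ chainReach π a g x z := hp.not_chainReach_of_freeAt (Or.inl ha)
    (Or.inr (hB.freeAt_y hp hnone hw hw' hga hgb))
    (Or.inr (hB.freeAt_z hp hxz hu hu' hgb hga hgc)) hB.adj_xy.ne
    hB.adj_xz.ne hB.y_ne_z hxy_r
  -- swapping the `(a, g)`-chain `x w y` makes the colors of `xw` and `zu` equal
  have hxw_new : kempeSwap π a g x s(x, w) = some a := by
    rw [kempeSwap_of_chainReach (Sym2.mem_mk_left _ _) (Reachable.refl x), hxw]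
    simp
  have hyw_new : kempeSwap π a g x s(y, w) = some g := by
    rw [kempeSwap_of_chainReach (Sym2.mem_mk_left _ _) hxy_r, hw]
    simp
  exact Extendable.of_kempeSwap <| hB.extendable_of_xz_eq_of_xw_eq_zu (isProperPEC_kempeSwap hp)
    (kempeSwap_of_eq_none hnone)
    (by simpa using freeAt_kempeSwap_of_chainReach (m := a) (t := g) (Reachable.refl x) ha)
    hyw_new (kempeSwap_of_eq_some hw' hba hgb.symm) (kempeSwap_of_eq_some hxz hba hgb.symm) hxw_new
    ((hp.kempeSwap_mk_of_not_chainReach hxz_nr u).trans hu)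
    (kempeSwap_of_eq_some hxu (ha.ne hxu) hgc.symm)
    ((hp.kempeSwap_mk_of_not_chainReach hxz_nr u').trans hu')
    (kempeSwap_ne_none_iff.mpr hxu')

lemma extendable_of_xz_eq_of_freeAt_z (hB : ButterflyConfig G x y z w w' u u')
    (hp : IsProperPEC G D π) (hnone : π s(x, y) = none) (ha : freeAt π x a)
    (hw : π s(y, w) = some a) (hw' : π s(y, w') = some b) (hxz : π s(x, z) = some b)
    (hza : freeAt π z a) {c₁ c₂ : Fin D} (hu : π s(z, u) = some c₁)
    (hu' : π s(z, u') = some c₂) (hxu : π s(x, u) ≠ none) (hxw : π s(x, w) ≠ none)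
    (hxu' : π s(x, u') ≠ none) : Extendable G π s(x, y) := by
  have hc₁a : c₁ ≠ a := hza.ne hu
  rcases hp.extendable_or_not_chainReach hB.adj_xy hnone ha
    (hB.freeAt_y hp hnone hw hw' hc₁a (hp.color_ne hu (Sym2.eq_swap ▸ hxz) hB.adj_xu.ne.symm))
    (Or.inl hza) hB.adj_xz.ne hB.y_ne_z with h | ⟨hzx, hzy⟩
  · exact h
  have hu_new : kempeSwap π a c₁ z s(z, u) = some a := by
    rw [kempeSwap_of_chainReach (Sym2.mem_mk_left _ _) (Reachable.refl z), hu]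
    simp
  have hu'_new : kempeSwap π a c₁ z s(z, u') = some c₂ :=
    kempeSwap_of_eq_some hu' (hza.ne hu') (hp.color_ne hu' hu hB.u_ne_u'.symm)
  have hx_same := hp.kempeSwap_mk_of_not_chainReach hzx
  have hy_same := hp.kempeSwap_mk_of_not_chainReach hzy
  exact Extendable.of_kempeSwap <| hB.extendable_of_xz_eq_of_zu_eq (isProperPEC_kempeSwap hp)
    ((hx_same y).trans hnone) (hp.freeAt_kempeSwap_of_not_chainReach hzx ha)
    ((hy_same w).trans hw) ((hy_same w').trans hw') ((hx_same z).trans hxz) hu_new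
    hu'_new (by rwa [hx_same]) (by rwa [hx_same]) (by rwa [hx_same])

lemma extendable_of_yw_eq (hB : ButterflyConfig G x y z w w' u u') (hp : IsProperPEC G D π)
    (hD : 4 < D) (hnone : π s(x, y) = none) (ha : freeAt π x a) (hw : π s(y, w) = some a)
    (hw' : π s(y, w') ≠ none) (hxz : π s(x, z) ≠ none) (hu : π s(z, u) ≠ none)
    (hu' : π s(z, u') ≠ none) (hxu : π s(x, u) ≠ none) (hxw : π s(x, w) ≠ none)
    (hxu' : π s(x, u') ≠ none) : Extendable G π s(x, y) := by
  obtain ⟨b, hw'⟩ := Option.ne_none_iff_exists'.mp hw'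
  obtain ⟨c, hxz⟩ := Option.ne_none_iff_exists'.mp hxz
  obtain ⟨c₁, hu⟩ := Option.ne_none_iff_exists'.mp hu
  obtain ⟨c₂, hu'⟩ := Option.ne_none_iff_exists'.mp hu'
  by_cases hcb : c ≠ b
  · exact hB.extendable_of_xz_ne hp hD hnone ha hw hw' hxz hcb hu hu'
  rw [not_not.mp hcb] at hxz
  by_cases h₁ : c₁ = a
  · exact hB.extendable_of_xz_eq_of_zu_eq hp hnone ha hw hw' hxz (h₁ ▸ hu) hu' hxu hxw hxu'
  by_cases h₂ : c₂ = a
  · exact hB.swap_u.extendable_of_xz_eq_of_zu_eq hp hnone ha hw hw' hxz (h₂ ▸ hu') hu hxu'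
      hxw hxu
  exact hB.extendable_of_xz_eq_of_freeAt_z hp hnone ha hw hw' hxz
    (hB.freeAt_z hp hxz hu hu' (ha.ne hxz).symm (Ne.symm h₁) (Ne.symm h₂)) hu hu' hxu hxw hxu'

theorem extendable (hB : ButterflyConfig G x y z w w' u u') [Fintype (G.neighborSet x)]
    (hp : IsProperPEC G D π) (hD : 4 < D) (hdeg : G.degree x ≤ D) (hnone : π s(x, y) = none)
    (hx : ∀ v, G.Adj x v → v ≠ y → π s(x, v) ≠ none)
    (hy : ∀ v, G.Adj y v → v ≠ x → π s(y, v) ≠ none)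
    (hz : ∀ v, G.Adj z v → π s(z, v) ≠ none) : Extendable G π s(x, y) := by
  obtain ⟨a, ha⟩ := hp.exists_freeAt hdeg hB.adj_xy hnone
  have hxz := hx z hB.adj_xz hB.y_ne_z.symm
  have hxu := hx u hB.adj_xu hB.y_ne_u.symm
  have hxu' := hx u' hB.adj_xu' hB.y_ne_u'.symm
  have hxw := hx w hB.adj_xw hB.adj_yw.ne.symm
  have hxw' := hx w' hB.adj_xw' hB.adj_yw'.ne.symm
  have hzu := hz u hB.adj_zu
  have hzu' := hz u' hB.adj_zu'
  obtain ⟨b, hyw⟩ := Option.ne_none_iff_exists'.mp (hy w hB.adj_yw hB.adj_xw.ne.symm)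
  obtain ⟨b', hyw'⟩ := Option.ne_none_iff_exists'.mp (hy w' hB.adj_yw' hB.adj_xw'.ne.symm)
  by_cases hb : b = a
  · exact hB.extendable_of_yw_eq hp hD hnone ha (hb ▸ hyw) (by simp [hyw']) hxz hzu hzu' hxu
      hxw hxu'
  by_cases hb' : b' = a
  · exact hB.swap_w.extendable_of_yw_eq hp hD hnone ha (hb' ▸ hyw') (by simp [hyw]) hxz hzu
      hzu' hxu hxw' hxu'
  exact extendable_of_freeAt hp hB.adj_xy hnone ha
    (hB.freeAt_y hp hnone hyw hyw' (Ne.symm hb) (Ne.symm hb'))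

end ButterflyConfig

lemma SimpleGraph.eq_or_eq_or_eq_of_degree_eq_three {V : Type} {G : SimpleGraph V} {v a b c : V}
    [Fintype (G.neighborSet v)] (hdeg : G.degree v = 3) (ha : G.Adj v a) (hb : G.Adj v b)
    (hc : G.Adj v c) (hab : a ≠ b) (hac : a ≠ c) (hbc : b ≠ c) {t : V} (ht : G.Adj v t) :
    t = a ∨ t = b ∨ t = c := by
  classical
  have hsub : ({a, b, c} : Finset V) ⊆ G.neighborFinset v := by
    intro s hs
    simp only [Finset.mem_insert, Finset.mem_singleton] at hs
    rcases hs with rfl | rfl | rfl <;> simpa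
  have heq := Finset.eq_of_subset_of_card_le hsub (by
    rw [card_neighborFinset_eq_degree, hdeg,
      Finset.card_eq_three.mpr ⟨a, b, c, hab, hac, hbc, rfl⟩])
  have hmem : t ∈ ({a, b, c} : Finset V) := heq ▸ (G.mem_neighborFinset v t).mpr ht
  simpa using hmem

section Butterflies

variable {V : Type} [Fintype V] [DecidableEq V] {G : SimpleGraph V} [DecidableRel G.Adj]

lemma IsButterflyB1.butterflyConfig {x y z v₁ v₂ v₃ : V} (h : IsButterflyB1 G x y z v₁ v₂ v₃) :
    ButterflyConfig G x y z v₁ v₃ v₁ v₂ := by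
  obtain ⟨hpw, hxy, hxz, hyv₁, hyv₃, hzv₁, hzv₂, hxv₁, hxv₂, hxv₃, hdy, hdz, -⟩ := h
  simp only [List.pairwise_cons, List.mem_cons, List.not_mem_nil, forall_eq_or_imp,
    false_implies, implies_true, and_true, List.Pairwise.nil] at hpw
  obtain ⟨⟨-, -, hxv₁', hxv₂', hxv₃'⟩, ⟨hyz, hyv₁', hyv₂', -⟩, ⟨hzv₁', -, hzv₃'⟩, ⟨hv₁₂, hv₁₃⟩,
    -⟩ := hpw
  exact { adj_xy := hxy, adj_xz := hxz, adj_xw := hxv₁, adj_xw' := hxv₃, adj_xu := hxv₁,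
          adj_xu' := hxv₂, adj_yw := hyv₁, adj_yw' := hyv₃, adj_zu := hzv₁, adj_zu' := hzv₂,
          y_ne_z := hyz, z_ne_w := hzv₁', z_ne_w' := hzv₃', y_ne_u := hyv₁', y_ne_u' := hyv₂',
          u_ne_u' := hv₁₂
          nbrs_y := fun _ =>
            eq_or_eq_or_eq_of_degree_eq_three hdy hxy.symm hyv₁ hyv₃ hxv₁' hxv₃' hv₁₃
          nbrs_z := fun _ =>
            eq_or_eq_or_eq_of_degree_eq_three hdz hxz.symm hzv₁ hzv₂ hxv₁' hxv₂' hv₁₂ }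

lemma IsButterflyB2.butterflyConfig {x y z v₁ v₂ v₃ v₄ : V}
    (h : IsButterflyB2 G x y z v₁ v₂ v₃ v₄) : ButterflyConfig G x y z v₁ v₄ v₂ v₃ := by
  obtain ⟨hpw, hxy, hxz, hyv₁, hyv₄, hzv₂, hzv₃, hxv₁, hxv₂, hxv₃, hxv₄, hdy, hdz, -⟩ := h
  simp only [List.pairwise_cons, List.mem_cons, List.not_mem_nil, forall_eq_or_imp,
    false_implies, implies_true, and_true, List.Pairwise.nil] at hpw
  obtain ⟨⟨-, -, hxv₁', hxv₂', hxv₃', hxv₄'⟩, ⟨hyz, -, hyv₂', hyv₃', -⟩, ⟨hzv₁', -, -, hzv₄'⟩,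
    ⟨-, -, hv₁₄⟩, ⟨hv₂₃, -⟩, -⟩ := hpw
  exact { adj_xy := hxy, adj_xz := hxz, adj_xw := hxv₁, adj_xw' := hxv₄, adj_xu := hxv₂,
          adj_xu' := hxv₃, adj_yw := hyv₁, adj_yw' := hyv₄, adj_zu := hzv₂, adj_zu' := hzv₃,
          y_ne_z := hyz, z_ne_w := hzv₁', z_ne_w' := hzv₄', y_ne_u := hyv₂', y_ne_u' := hyv₃',
          u_ne_u' := hv₂₃
          nbrs_y := fun _ =>
            eq_or_eq_or_eq_of_degree_eq_three hdy hxy.symm hyv₁ hyv₄ hxv₁' hxv₄' hv₁₄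
          nbrs_z := fun _ =>
            eq_or_eq_or_eq_of_degree_eq_three hdz hxz.symm hzv₂ hzv₃ hxv₂' hxv₃' hv₂₃ }

lemma IsButterflyLikeAt.exists_butterflyConfig {x y : V} (h : IsButterflyLikeAt G x y) :
    ∃ z w w' u u', ButterflyConfig G x y z w w' u u' := by
  rcases h with ⟨z, v₁, v₂, v₃, h⟩ | ⟨z, v₁, v₂, v₃, v₄, h⟩
  exacts [⟨_, _, _, _, _, h.butterflyConfig⟩, ⟨_, _, _, _, _, h.butterflyConfig⟩]

end Butterflies

lemma edgeDistLE_one_of_mem {V : Type} {G : SimpleGraph V} {v v' t : V} {e : Sym2 V}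
    (ht : t ∈ e) (h : v = t ∨ G.Adj v t) : edgeDistLE G 1 s(v, v') e := by
  refine ⟨v, Sym2.mem_mk_left _ _, t, ht, ?_⟩
  rcases h with rfl | h
  exacts [⟨Walk.nil, zero_le_one⟩, ⟨h.toWalk, le_rfl⟩]

/-- A partial 8-edge-coloring can be extended to any uncolored butterfly-like edge all of
whose surrounding edges (at distance at most 1) are colored. -/
theorem stmt15 {V : Type} [Fintype V] [DecidableEq V] (G : SimpleGraph V) [DecidableRel G.Adj]
    (hΔ : G.maxDegree ≤ 8) (π : Sym2 V → Option (Fin 8)) (hπ : IsProperPEC G 8 π)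
    (e : Sym2 V) (hbf : IsButterflyLike G e) (huncol : π e = none)
    (hcol : ∀ e' ∈ G.edgeSet, e' ≠ e → edgeDistLE G 1 e' e → π e' ≠ none) :
    ∃ σ : Sym2 V → Option (Fin 8), IsProperPEC G 8 σ ∧
      ∀ e', (σ e' ≠ none ↔ (π e' ≠ none ∨ e' = e)) := by
  obtain ⟨x, y, rfl, hxy⟩ := hbf
  obtain ⟨z, w, w', u, u', hB⟩ := hxy.exists_butterflyConfig
  refine hB.extendable hπ (by norm_num) ((G.degree_le_maxDegree x).trans hΔ) huncol
    (fun v hv hvy => hcol _ hv (fun h => hvy (Sym2.congr_right.mp h))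
      (edgeDistLE_one_of_mem (Sym2.mem_mk_left x y) (Or.inl rfl)))
    (fun v hv hvx => hcol _ hv (fun h => hvx (Sym2.congr_right.mp (h.trans Sym2.eq_swap)))
      (edgeDistLE_one_of_mem (Sym2.mem_mk_right x y) (Or.inl rfl)))
    (fun v hv => hcol _ hv (fun h => ?_)
      (edgeDistLE_one_of_mem (Sym2.mem_mk_left x y) (Or.inr hB.adj_xz.symm)))
  rcases Sym2.mem_iff.mp (h ▸ Sym2.mem_mk_left z v) with h | h
  exacts [hB.adj_xz.ne h.symm, hB.y_ne_z h.symm]
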